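/- arXiv:1503.04705 — 7 statements merged into one kernel-verified Lean document; each statement's English description precedes it below -/
import Mathlib

section
/- For every h ∈ C₊ ∩ C₋ one has Eis h = 0 if and only if M h = −h (equality in 𝒞). (Lemma 'l:KerEis' of the paper, describing the kernel of the Eisenstein operator on compactly supported functions.) -/
/-- Lemma `l:KerEis` of the paper: for every `h ∈ C₊ ∩ C₋` one has
`Eis h = 0` if and only if `M h = -h` (equality in `𝒞`).
The hypotheses encode: `E = ℝ`; `𝒜_c ⊆ 𝒜` a subspace with
`Eis (C₊ ∩ C₋) ⊆ 𝒜_c`; `B_naive` a symmetric positive-definite bilinear form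
on `𝒜_c`; and a bilinear pairing `⟨·,·⟩ : 𝒞 × (C₊ ∩ C₋) → ℝ` satisfying the
adjunction `⟨CT f, φ⟩ = B_naive (f, Eis φ)`. -/
theorem stmt_4 {𝒜 𝒞 : Type*}
    [AddCommGroup 𝒜] [Module ℝ 𝒜] [AddCommGroup 𝒞] [Module ℝ 𝒞]
    (Cp Cm : Submodule ℝ 𝒞)
    (CT : 𝒜 →ₗ[ℝ] 𝒞) (Eis : Cp →ₗ[ℝ] 𝒜) (M : Cp ≃ₗ[ℝ] Cm)
    (hCTEis : ∀ φ : Cp, CT (Eis φ) = (φ : 𝒞) + ((M φ : Cm) : 𝒞))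
    (Ac : Submodule ℝ 𝒜)
    (hEisAc : ∀ (φ : 𝒞) (hp : φ ∈ Cp), φ ∈ Cm → Eis ⟨φ, hp⟩ ∈ Ac)
    (Bnaive : Ac →ₗ[ℝ] Ac →ₗ[ℝ] ℝ)
    (hBsymm : ∀ a b : Ac, Bnaive a b = Bnaive b a)
    (hBpos : ∀ a : Ac, a ≠ 0 → 0 < Bnaive a a)
    (pair : 𝒞 →ₗ[ℝ] ↥(Cp ⊓ Cm) →ₗ[ℝ] ℝ)
    (hadj : ∀ (f : Ac) (φ : ↥(Cp ⊓ Cm)),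
      pair (CT f) φ =
        Bnaive f ⟨Eis ⟨(φ : 𝒞), (Submodule.mem_inf.mp φ.2).1⟩,
          hEisAc _ (Submodule.mem_inf.mp φ.2).1 (Submodule.mem_inf.mp φ.2).2⟩) :
    ∀ (h : 𝒞) (hp : h ∈ Cp) (hm : h ∈ Cm),
      Eis ⟨h, hp⟩ = 0 ↔ ((M ⟨h, hp⟩ : Cm) : 𝒞) = -h := by
  intro h hp hm
  constructor
  · intro hE
    have := hCTEis ⟨h, hp⟩
    rw [hE, map_zero] at this
    have h0 : (0:𝒞) = h + ((M ⟨h, hp⟩ : Cm) : 𝒞) := this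
    rw [eq_neg_iff_add_eq_zero, add_comm]
    exact h0.symm
  · intro hM
    -- CT (Eis h) = h + (-h) = 0
    have hCT : CT (Eis ⟨h, hp⟩) = 0 := by
      rw [hCTEis ⟨h, hp⟩, hM]; abel
    have hmem : h ∈ Cp ⊓ Cm := Submodule.mem_inf.mpr ⟨hp, hm⟩
    set a : Ac := ⟨Eis ⟨h, hp⟩, hEisAc h hp hm⟩ with ha
    have hB : Bnaive a a = 0 := by
      have := hadj a ⟨h, hmem⟩
      simp only at this
      rw [hCT, map_zero] at this
      simp only [LinearMap.zero_apply] at this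
      rw [← this]
    by_contra hne
    have : a ≠ 0 := by
      intro h0
      apply hne
      have : (a : 𝒜) = 0 := by rw [h0]; rfl
      simpa [ha] using this
    exact absurd hB (ne_of_gt (hBpos a this))
end

section
/- Let f ∈ C₊ ∩ C₋ satisfy Eis f = 0. Then Eis(σ f) − Eis(M⁻¹(σ f)) = 0, i.e. (Eis − Eis')(σ f) = 0. (Lemma 'l:t star f'(i) of the paper, with σ the action f ↦ t ⋆ f of an idele class t.) -/
/-- Lemma `l:t star f`(i) of the paper: if `f ∈ C₊ ∩ C₋` satisfies `Eis f = 0`,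
then `(Eis - Eis')(σ f) = 0`, i.e. `Eis (σ f) - Eis (M⁻¹ (σ f)) = 0`, where
`σ` is the action `f ↦ t ⋆ f` of an idele class `t`: a linear automorphism of
`𝒞` such that `σ` and `σ⁻¹` preserve `C₊` and `C₋` and `M (σ φ) = σ⁻¹ (M φ)`
for `φ ∈ C₊`. -/
theorem stmt_5 {𝒜 𝒞 : Type*}
    [AddCommGroup 𝒜] [Module ℝ 𝒜] [AddCommGroup 𝒞] [Module ℝ 𝒞]
    (Cp Cm : Submodule ℝ 𝒞)
    (CT : 𝒜 →ₗ[ℝ] 𝒞) (Eis : Cp →ₗ[ℝ] 𝒜) (M : Cp ≃ₗ[ℝ] Cm)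
    (hCTEis : ∀ φ : Cp, CT (Eis φ) = (φ : 𝒞) + ((M φ : Cm) : 𝒞))
    (Ac : Submodule ℝ 𝒜)
    (hEisAc : ∀ (φ : 𝒞) (hp : φ ∈ Cp), φ ∈ Cm → Eis ⟨φ, hp⟩ ∈ Ac)
    (Bnaive : Ac →ₗ[ℝ] Ac →ₗ[ℝ] ℝ)
    (hBsymm : ∀ a b : Ac, Bnaive a b = Bnaive b a)
    (hBpos : ∀ a : Ac, a ≠ 0 → 0 < Bnaive a a)
    (pair : 𝒞 →ₗ[ℝ] ↥(Cp ⊓ Cm) →ₗ[ℝ] ℝ)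
    (hadj : ∀ (f : Ac) (φ : ↥(Cp ⊓ Cm)),
      pair (CT f) φ =
        Bnaive f ⟨Eis ⟨(φ : 𝒞), (Submodule.mem_inf.mp φ.2).1⟩,
          hEisAc _ (Submodule.mem_inf.mp φ.2).1 (Submodule.mem_inf.mp φ.2).2⟩)
    (σ : 𝒞 ≃ₗ[ℝ] 𝒞)
    (hσp : ∀ φ ∈ Cp, σ φ ∈ Cp) (hσm : ∀ φ ∈ Cm, σ φ ∈ Cm)
    (hσ'p : ∀ φ ∈ Cp, σ.symm φ ∈ Cp) (hσ'm : ∀ φ ∈ Cm, σ.symm φ ∈ Cm)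
    (hMσ : ∀ φ : Cp,
      ((M ⟨σ (φ : 𝒞), hσp _ φ.2⟩ : Cm) : 𝒞) = σ.symm ((M φ : Cm) : 𝒞)) :
    ∀ (f : 𝒞) (hp : f ∈ Cp) (hm : f ∈ Cm), Eis ⟨f, hp⟩ = 0 →
      Eis ⟨σ f, hσp f hp⟩ - Eis (M.symm ⟨σ f, hσm f hm⟩) = 0 := by
  intro f hp hm hEis0
  set F : Cp := ⟨f, hp⟩ with hF
  -- Step 1: M f = -f
  have hMF : ((M F : Cm) : 𝒞) = -f := by
    have h := hCTEis F
    rw [hEis0, map_zero] at h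
    exact eq_neg_of_add_eq_zero_right h.symm
  -- Step 2: M (σ⁻¹ f) = -σ f
  set ψ : Cp := ⟨σ.symm f, hσ'p f hp⟩ with hψ
  have hMψ : ((M ψ : Cm) : 𝒞) = -(σ f) := by
    have h := hMσ ψ
    have he : (⟨σ (ψ : 𝒞), hσp _ ψ.2⟩ : Cp) = F := by
      apply Subtype.ext; simp [hψ, hF]
    rw [he, hMF] at h
    have := congrArg σ h
    simp at this
    symm; simpa using this
  -- Step 3: M (σ f) = -σ⁻¹ f
  have hMσF : ((M ⟨σ f, hσp f hp⟩ : Cm) : 𝒞) = -(σ.symm f) := by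
    have h := hMσ F
    rw [hMF] at h
    have he : (⟨σ (F : 𝒞), hσp _ F.2⟩ : Cp) = ⟨σ f, hσp f hp⟩ := rfl
    rw [he] at h
    rw [h]; simp
  -- Step 4: M.symm ⟨σ f, _⟩ = -ψ
  have hMsymm : M.symm ⟨σ f, hσm f hm⟩ = -ψ := by
    apply (LinearEquiv.symm_apply_eq M).mpr
    apply Subtype.ext
    rw [map_neg]
    show _ = -((M ψ : Cm) : 𝒞)
    rw [hMψ]; simp
  set G : Cp := ⟨σ f, hσp f hp⟩ + ψ with hG
  have hGm : ((G : Cp) : 𝒞) ∈ Cm := by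
    exact Cm.add_mem (hσm f hm) (hσ'm f hm)
  have hGinf : ((G : Cp) : 𝒞) ∈ Cp ⊓ Cm := Submodule.mem_inf.mpr ⟨G.2, hGm⟩
  -- CT (Eis G) = 0
  have hCTG : CT (Eis G) = 0 := by
    rw [hCTEis G]
    have : ((M G : Cm) : 𝒞) = -(σ.symm f) + -(σ f) := by
      rw [hG, map_add]
      show ((M ⟨σ f, hσp f hp⟩ : Cm) : 𝒞) + ((M ψ : Cm) : 𝒞) = _
      rw [hMσF, hMψ]
    rw [this, hG]
    show (σ f + σ.symm f) + _ = 0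
    abel
  -- Eis G ∈ Ac, and Bnaive a a = 0 forces a = 0
  set a : Ac := ⟨Eis G, by
    have := hEisAc ((G : Cp) : 𝒞) G.2 hGm
    simpa using this⟩ with ha
  have hadj' := hadj a ⟨((G : Cp) : 𝒞), hGinf⟩
  have hCTa : CT (a : 𝒜) = 0 := hCTG
  rw [hCTa, map_zero, LinearMap.zero_apply] at hadj'
  have haa : Bnaive a a = 0 := by
    rw [← hadj']
  have ha0 : a = 0 := by
    by_contra hne
    exact absurd haa (ne_of_gt (hBpos a hne))
  have hEisG : Eis G = 0 := by
    have := congrArg (Subtype.val) ha0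
    simpa [ha] using this
  rw [hMsymm, map_neg, sub_neg_eq_add, ← map_add, ← hG, hEisG]
end

section
/- For all f₁, f₂ ∈ 𝒜₀ one has ℬ(f₁, f₂) = B_naive(f₁, L f₂), and the bilinear form ℬ is symmetric: ℬ(f₁, f₂) = ℬ(f₂, f₁). (Formula (3.4) of the paper relating the form ℬ to the operator L.) -/
/-- Formula (3.4) of the paper: for all `f₁, f₂ ∈ 𝒜₀` one has
`ℬ(f₁, f₂) = B_naive(f₁, L f₂)`, and the form `ℬ` is symmetric, where
`ℬ(f₁, f₂) = B_naive(f₁, f₂) - ⟨M⁻¹(CT f₁), CT f₂⟩`,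
`L f = f - Eis(M⁻¹(CT f))`, `𝒜₀ = {f | CT f ∈ C₋}`; the pairing satisfies
`⟨φ, M ψ⟩ = ⟨ψ, M φ⟩`, `B_naive` is symmetric on `𝒜₀`, and
`B_naive(f, Eis φ) = ⟨φ, CT f⟩` for `f ∈ 𝒜₀`, `φ ∈ C₊`. -/
theorem stmt_6 {E 𝒜 𝒞 : Type*} [Field E]
    [AddCommGroup 𝒜] [Module E 𝒜] [AddCommGroup 𝒞] [Module E 𝒞]
    (Cp Cm : Submodule E 𝒞)
    (CT : 𝒜 →ₗ[E] 𝒞) (Eis : Cp →ₗ[E] 𝒜) (M : Cp ≃ₗ[E] Cm)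
    (hCTEis : ∀ φ : Cp, CT (Eis φ) = (φ : 𝒞) + ((M φ : Cm) : 𝒞))
    (pair : Cp →ₗ[E] Cm →ₗ[E] E)
    (hMselfadj : ∀ φ ψ : Cp, pair φ (M ψ) = pair ψ (M φ))
    (Bnaive : ↥(Cm.comap CT) →ₗ[E] 𝒜 →ₗ[E] E)
    (hBsymm : ∀ f g : ↥(Cm.comap CT), Bnaive f (g : 𝒜) = Bnaive g (f : 𝒜))
    (hadj : ∀ (f : ↥(Cm.comap CT)) (φ : Cp),
      Bnaive f (Eis φ) = pair φ ⟨CT (f : 𝒜), Submodule.mem_comap.mp f.2⟩) :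
    ∀ f₁ f₂ : ↥(Cm.comap CT),
      (Bnaive f₁ (f₂ : 𝒜) -
          pair (M.symm ⟨CT (f₁ : 𝒜), Submodule.mem_comap.mp f₁.2⟩)
            ⟨CT (f₂ : 𝒜), Submodule.mem_comap.mp f₂.2⟩
        = Bnaive f₁
            ((f₂ : 𝒜) -
              Eis (M.symm ⟨CT (f₂ : 𝒜), Submodule.mem_comap.mp f₂.2⟩))) ∧
      (Bnaive f₁ (f₂ : 𝒜) -
          pair (M.symm ⟨CT (f₁ : 𝒜), Submodule.mem_comap.mp f₁.2⟩)
            ⟨CT (f₂ : 𝒜), Submodule.mem_comap.mp f₂.2⟩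
        = Bnaive f₂ (f₁ : 𝒜) -
          pair (M.symm ⟨CT (f₂ : 𝒜), Submodule.mem_comap.mp f₂.2⟩)
            ⟨CT (f₁ : 𝒜), Submodule.mem_comap.mp f₁.2⟩) := by
  intro f₁ f₂
  -- key swap lemma for the pairing
  have hswap : ∀ c₁ c₂ : Cm, pair (M.symm c₁) c₂ = pair (M.symm c₂) c₁ := by
    intro c₁ c₂
    have := hMselfadj (M.symm c₁) (M.symm c₂)
    simpa using this
  set c₁ : Cm := ⟨CT (f₁ : 𝒜), Submodule.mem_comap.mp f₁.2⟩
  set c₂ : Cm := ⟨CT (f₂ : 𝒜), Submodule.mem_comap.mp f₂.2⟩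
  have h1 : Bnaive f₁ ((f₂ : 𝒜) - Eis (M.symm c₂))
      = Bnaive f₁ (f₂ : 𝒜) - pair (M.symm c₂) c₁ := by
    rw [map_sub, hadj f₁ (M.symm c₂)]
  constructor
  · rw [h1, hswap c₁ c₂]
  · rw [hBsymm f₁ f₂, hswap c₁ c₂]
end

section
/- Let s ∈ ℂ with Re(s) > 1. Then the integral ∫₀¹ (1 − t²)^{−3/2}·(t^{s−1} − 1) dt converges absolutely and equals −√π · Γ(s/2)/Γ((s−1)/2). Equivalently, −π^{−1} ∫₀¹ (1 − t²)^{−3/2}(t^{s−1} − 1) dt = ζ_ℝ(s)/ζ_ℝ(s−1), where ζ_ℝ(s) := π^{−s/2}Γ(s/2). (Proposition 'p:beta_v'(ii),(iv) of the paper at a real place: the Mellin transform of the distribution β_v.) -/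
/-! Integrate by parts against the primitive `t (1 - t²)^{-1/2}` of `(1 - t²)^{-3/2}`. The boundary
terms vanish because `t^{s-1} - 1 = O(1 - t)` on `[0, 1]` when `Re s > 1`, which is also what makes
the integral converge at `t = 1`. What remains is `-(s - 1) ∫₀¹ t^{s-1} (1 - t²)^{-1/2} dt`, and
the substitution `x = t²` turns this into `-(s - 1)/2 · B(s/2, 1/2)`, which equals
`-√π Γ(s/2)/Γ((s-1)/2)` by `Γ(1/2) = √π` and `Γ((s+1)/2) = (s-1)/2 · Γ((s-1)/2)`. -/

open MeasureTheory Real Complex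

open Set Filter Topology

lemma one_sub_rpow_le_max_mul {a t : ℝ} (ha : 0 < a) (ht0 : 0 ≤ t) (ht1 : t ≤ 1) :
    1 - t ^ a ≤ max 1 a * (1 - t) := by
  rcases le_total a 1 with h | h
  · have : t ≤ t ^ a := by simpa using Real.rpow_le_rpow_of_exponent_ge' ht0 ht1 ha.le h
    nlinarith [le_max_left 1 a]
  · have hb := one_add_mul_self_le_rpow_one_add (s := t - 1) (by linarith) h
    rw [add_sub_cancel] at hb
    nlinarith [le_max_right 1 a]

lemma one_sub_sq_rpow_mul_le {r t : ℝ} (hr : r ≤ 0) (ht0 : 0 ≤ t) (ht1 : t < 1) :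
    (1 - t ^ 2) ^ r * (1 - t) ≤ (1 - t) ^ (r + 1) := by
  have h1t : 0 < 1 - t := by linarith
  rw [rpow_add_one h1t.ne']
  exact mul_le_mul_of_nonneg_right (rpow_le_rpow_of_nonpos h1t (by nlinarith) hr) h1t.le

lemma integrableOn_one_sub_rpow {r : ℝ} (hr : -1 < r) :
    IntegrableOn (fun t : ℝ => (1 - t) ^ r) (Ioo 0 1) := by
  have h := ((intervalIntegral.intervalIntegrable_rpow' hr (a := 0) (b := 1)).comp_sub_left 1).symm
  rw [sub_zero, sub_self] at h
  exact (intervalIntegrable_iff_integrableOn_Ioo_of_le zero_le_one).1 h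

lemma norm_ofReal_cpow_sub_one_le {w : ℂ} (hw : 0 < w.re) {t : ℝ} (ht0 : 0 ≤ t) (ht1 : t ≤ 1) :
    ‖(t : ℂ) ^ w - 1‖ ≤ ‖w‖ / w.re * (1 - t ^ w.re) := by
  have hw0 : w ≠ 0 := fun h => by simp [h] at hw
  -- `t ^ w - 1 = -w ∫_t^1 y^(w-1) dy`, and `‖y ^ (w - 1)‖ = y ^ (Re w - 1)`.
  have hcpow : ∫ y in t..1, (y : ℂ) ^ (w - 1) = (1 - (t : ℂ) ^ w) / w := by
    rw [integral_cpow (Or.inl (by simpa using hw))]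
    simp
  have hrpow : ∫ y in t..1, y ^ (w.re - 1) = (1 - t ^ w.re) / w.re := by
    rw [integral_rpow (Or.inl (by linarith))]
    simp
  have hbound : ‖∫ y in t..1, (y : ℂ) ^ (w - 1)‖ ≤ ∫ y in t..1, y ^ (w.re - 1) := by
    refine intervalIntegral.norm_integral_le_of_norm_le ht1 (ae_of_all _ fun y hy => ?_)
      (intervalIntegral.intervalIntegrable_rpow' (by linarith))
    rw [norm_cpow_eq_rpow_re_of_pos (ht0.trans_lt hy.1)]
    simp
  rw [hcpow, hrpow, norm_div, div_le_div_iff₀ (norm_pos_iff.2 hw0) hw, norm_sub_rev] at hbound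
  rw [div_mul_eq_mul_div, le_div_iff₀ hw]
  linarith

lemma exists_norm_ofReal_cpow_sub_one_le {w : ℂ} (hw : 0 < w.re) :
    ∃ C, 0 ≤ C ∧ ∀ t ∈ Icc (0 : ℝ) 1, ‖(t : ℂ) ^ w - 1‖ ≤ C * (1 - t) := by
  refine ⟨‖w‖ / w.re * max 1 w.re, by positivity, fun t ⟨ht0, ht1⟩ => ?_⟩
  calc ‖(t : ℂ) ^ w - 1‖ ≤ ‖w‖ / w.re * (1 - t ^ w.re) := norm_ofReal_cpow_sub_one_le hw ht0 ht1
    _ ≤ ‖w‖ / w.re * (max 1 w.re * (1 - t)) := by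
      gcongr; exact one_sub_rpow_le_max_mul hw ht0 ht1
    _ = _ := by ring

lemma image_sq_Ioo_zero_one : (fun t : ℝ => t ^ 2) '' Ioo 0 1 = Ioo 0 1 := by
  ext x
  constructor
  · rintro ⟨t, ⟨ht0, ht1⟩, rfl⟩
    exact ⟨by positivity, by nlinarith⟩
  · rintro ⟨hx0, hx1⟩
    exact ⟨√x, ⟨Real.sqrt_pos.2 hx0, (Real.sqrt_lt' one_pos).2 (by simpa using hx1)⟩,
      Real.sq_sqrt hx0.le⟩

lemma injOn_sq_Ioo_zero_one : InjOn (fun t : ℝ => t ^ 2) (Ioo 0 1) :=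
  fun _ ha _ hb h => (pow_left_inj₀ ha.1.le hb.1.le two_ne_zero).1 h

lemma hasDerivWithinAt_sq_Ioo_zero_one :
    ∀ t ∈ Ioo (0 : ℝ) 1, HasDerivWithinAt (fun t : ℝ => t ^ 2) (2 * t) (Ioo 0 1) t :=
  fun t _ => by simpa using (hasDerivAt_pow 2 t).hasDerivWithinAt

section SqSubstitution

variable {E : Type*} [NormedAddCommGroup E] [NormedSpace ℝ E]

lemma integrableOn_Ioo_zero_one_comp_sq_iff (g : ℝ → E) :
    IntegrableOn (fun t => (2 * t) • g (t ^ 2)) (Ioo (0 : ℝ) 1) ↔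
      IntegrableOn g (Ioo (0 : ℝ) 1) := by
  have h := integrableOn_image_iff_integrableOn_abs_deriv_smul measurableSet_Ioo
    hasDerivWithinAt_sq_Ioo_zero_one injOn_sq_Ioo_zero_one g
  rw [image_sq_Ioo_zero_one] at h
  rw [h]
  refine integrableOn_congr_fun (fun t ht => ?_) measurableSet_Ioo
  rw [abs_of_pos (by linarith [ht.1])]

lemma setIntegral_Ioo_zero_one_comp_sq (g : ℝ → E) :
    ∫ t in Ioo (0 : ℝ) 1, (2 * t) • g (t ^ 2) = ∫ x in Ioo (0 : ℝ) 1, g x := by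
  have h := integral_image_eq_integral_abs_deriv_smul measurableSet_Ioo
    hasDerivWithinAt_sq_Ioo_zero_one injOn_sq_Ioo_zero_one g
  rw [image_sq_Ioo_zero_one] at h
  rw [h]
  refine setIntegral_congr_fun measurableSet_Ioo fun t ht => ?_
  rw [abs_of_pos (by linarith [ht.1])]

end SqSubstitution

lemma two_mul_smul_betaIntegrand_sq (a b : ℂ) {t : ℝ} (ht : 0 < t) :
    (2 * t) • (((t ^ 2 : ℝ) : ℂ) ^ (a - 1) * (1 - ((t ^ 2 : ℝ) : ℂ)) ^ (b - 1)) =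
      2 * ((t : ℂ) ^ (2 * a - 1) * (1 - (t : ℂ) ^ 2) ^ (b - 1)) := by
  have htC : (t : ℂ) ≠ 0 := ofReal_ne_zero.2 ht.ne'
  have hsq : ((t ^ 2 : ℝ) : ℂ) ^ (a - 1) = (t : ℂ) ^ (2 * a - 2) := by
    rw [sq, ofReal_mul, mul_cpow_ofReal_nonneg ht.le ht.le, ← cpow_add _ _ htC]
    ring_nf
  have hmul : (t : ℂ) * (t : ℂ) ^ (2 * a - 2) = (t : ℂ) ^ (2 * a - 1) := by
    rw [show 2 * a - 1 = 1 + (2 * a - 2) by ring, cpow_add _ _ htC, cpow_one]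
  rw [hsq, real_smul, ← hmul]
  push_cast
  ring

theorem Complex.betaIntegral_eq_two_mul_setIntegral_sq (a b : ℂ) :
    betaIntegral a b =
      2 * ∫ t in Ioo (0 : ℝ) 1, (t : ℂ) ^ (2 * a - 1) * (1 - (t : ℂ) ^ 2) ^ (b - 1) := by
  rw [betaIntegral, intervalIntegral.integral_of_le zero_le_one, integral_Ioc_eq_integral_Ioo,
    ← setIntegral_Ioo_zero_one_comp_sq, ← integral_const_mul]
  exact setIntegral_congr_fun measurableSet_Ioo fun t ht => two_mul_smul_betaIntegrand_sq a b ht.1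

theorem Complex.integrableOn_cpow_mul_one_sub_sq_cpow {a b : ℂ} (ha : 0 < a.re) (hb : 0 < b.re) :
    IntegrableOn (fun t : ℝ => (t : ℂ) ^ (2 * a - 1) * (1 - (t : ℂ) ^ 2) ^ (b - 1)) (Ioo 0 1) := by
  have hbeta := ((intervalIntegrable_iff_integrableOn_Ioo_of_le zero_le_one).1
    (betaIntegral_convergent ha hb))
  rw [← integrableOn_Ioo_zero_one_comp_sq_iff] at hbeta
  refine IntegrableOn.congr_fun (hbeta.const_mul (2⁻¹ : ℂ)) (fun t ht => ?_) measurableSet_Ioo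
  rw [two_mul_smul_betaIntegrand_sq a b ht.1, inv_mul_cancel_left₀ two_ne_zero]

lemma cpow_mul_one_sub_sq_cpow_half_eq (s : ℂ) {t : ℝ} (ht : t ^ 2 ≤ 1) :
    (t : ℂ) ^ (2 * (s / 2) - 1) * (1 - (t : ℂ) ^ 2) ^ ((1 : ℂ) / 2 - 1) =
      (t : ℂ) ^ (s - 1) * (((1 - t ^ 2) ^ (-(1 : ℝ) / 2) : ℝ) : ℂ) := by
  rw [ofReal_cpow (by linarith), show 2 * (s / 2) - 1 = s - 1 by ring]
  push_cast
  ring_nf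

lemma setIntegral_cpow_mul_one_sub_sq_rpow_neg_half (s : ℂ) :
    ∫ t in Ioo (0 : ℝ) 1, (t : ℂ) ^ (s - 1) * (((1 - t ^ 2) ^ (-(1 : ℝ) / 2) : ℝ) : ℂ) =
      betaIntegral (s / 2) (1 / 2) / 2 := by
  rw [betaIntegral_eq_two_mul_setIntegral_sq, mul_div_cancel_left₀ _ two_ne_zero]
  exact setIntegral_congr_fun measurableSet_Ioo fun t ht =>
    (cpow_mul_one_sub_sq_cpow_half_eq s (by nlinarith [ht.1, ht.2])).symm

lemma hasDerivAt_mul_one_sub_sq_rpow_neg_half {t : ℝ} (ht : t ^ 2 < 1) :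
    HasDerivAt (fun t : ℝ => t * (1 - t ^ 2) ^ (-(1 : ℝ) / 2))
      ((1 - t ^ 2) ^ (-(3 : ℝ) / 2)) t := by
  have hu : 0 < 1 - t ^ 2 := by linarith
  have h1 : HasDerivAt (fun t : ℝ => 1 - t ^ 2) (-(2 * t)) t := by
    simpa using (hasDerivAt_pow 2 t).const_sub 1
  have h := (hasDerivAt_id' t).fun_mul (h1.rpow_const (p := -(1 : ℝ) / 2) (Or.inl hu.ne'))
  refine h.congr_deriv ?_
  rw [show -(1 : ℝ) / 2 - 1 = -(3 : ℝ) / 2 by norm_num,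
    show -(1 : ℝ) / 2 = -(3 : ℝ) / 2 + 1 by norm_num, rpow_add_one hu.ne']
  ring

lemma exists_norm_mul_one_sub_sq_rpow_mul_cpow_sub_one_le {w : ℂ} (hw : 0 < w.re) :
    ∃ C, ∀ t ∈ Icc (0 : ℝ) 1,
      ‖((t * (1 - t ^ 2) ^ (-(1 : ℝ) / 2) : ℝ) : ℂ) * ((t : ℂ) ^ w - 1)‖ ≤ C * √(1 - t) := by
  obtain ⟨C, hC0, hC⟩ := exists_norm_ofReal_cpow_sub_one_le hw
  refine ⟨C, fun t ⟨ht0, ht1⟩ => ?_⟩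
  rcases ht1.lt_or_eq with ht1 | rfl
  · have hu : 0 ≤ (1 - t ^ 2) ^ (-(1 : ℝ) / 2) := rpow_nonneg (by nlinarith) _
    rw [norm_mul, norm_real, norm_of_nonneg (mul_nonneg ht0 hu)]
    calc t * (1 - t ^ 2) ^ (-(1 : ℝ) / 2) * ‖(t : ℂ) ^ w - 1‖
        ≤ 1 * (1 - t ^ 2) ^ (-(1 : ℝ) / 2) * (C * (1 - t)) :=
          mul_le_mul (mul_le_mul_of_nonneg_right ht1.le hu) (hC t ⟨ht0, ht1.le⟩)
            (norm_nonneg _) (by positivity)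
      _ ≤ C * (1 - t) ^ (-(1 : ℝ) / 2 + 1) := by
          rw [one_mul, mul_left_comm]
          exact mul_le_mul_of_nonneg_left (one_sub_sq_rpow_mul_le (by norm_num) ht0 ht1) hC0
      _ = C * √(1 - t) := by rw [sqrt_eq_rpow]; norm_num
  · simp

lemma continuousOn_mul_one_sub_sq_rpow_mul_cpow_sub_one {w : ℂ} (hw : 0 < w.re) :
    ContinuousOn (fun t : ℝ => ((t * (1 - t ^ 2) ^ (-(1 : ℝ) / 2) : ℝ) : ℂ) * ((t : ℂ) ^ w - 1))
      (Icc 0 1) := by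
  rintro t ⟨ht0, ht1⟩
  rcases ht1.lt_or_eq with ht1 | rfl
  · have hu : 1 - t ^ 2 ≠ 0 := by nlinarith
    have hφ : ContinuousAt (fun t : ℝ => ((t * (1 - t ^ 2) ^ (-(1 : ℝ) / 2) : ℝ) : ℂ)) t :=
      continuous_ofReal.continuousAt.comp (continuousAt_id.mul
        ((continuousAt_const.sub (continuous_pow 2).continuousAt).rpow_const (Or.inl hu)))
    exact (hφ.mul ((continuousAt_ofReal_cpow_const t _ (Or.inl hw)).sub
      continuousAt_const)).continuousWithinAt
  · obtain ⟨C, hC⟩ := exists_norm_mul_one_sub_sq_rpow_mul_cpow_sub_one_le hw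
    have hlim : Tendsto (fun t : ℝ => C * √(1 - t)) (𝓝 1) (𝓝 0) := by
      have hcont : Continuous fun t : ℝ => C * √(1 - t) := by fun_prop
      have h := hcont.tendsto 1
      rwa [sub_self, Real.sqrt_zero, mul_zero] at h
    have hF1 : ((1 * (1 - 1 ^ 2) ^ (-(1 : ℝ) / 2) : ℝ) : ℂ) * (((1 : ℝ) : ℂ) ^ w - 1) = 0 := by
      simp
    rw [ContinuousWithinAt, hF1]
    exact squeeze_zero_norm' (eventually_nhdsWithin_of_forall hC)
      (hlim.mono_left nhdsWithin_le_nhds)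

lemma integrableOn_one_sub_sq_rpow_mul_cpow_sub_one {w : ℂ} (hw : 0 < w.re) :
    IntegrableOn (fun t : ℝ => (((1 - t ^ 2) ^ (-(3 : ℝ) / 2) : ℝ) : ℂ) * ((t : ℂ) ^ w - 1))
      (Ioo 0 1) := by
  obtain ⟨C, hC0, hC⟩ := exists_norm_ofReal_cpow_sub_one_le hw
  refine Integrable.mono'
    ((integrableOn_one_sub_rpow (r := -(1 : ℝ) / 2) (by norm_num)).const_mul C)
    ?_ ((ae_restrict_iff' measurableSet_Ioo).2 (ae_of_all _ fun t ⟨ht0, ht1⟩ => ?_))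
  · refine ContinuousOn.aestronglyMeasurable (fun t ⟨ht0, ht1⟩ => ?_) measurableSet_Ioo
    have hu : 1 - t ^ 2 ≠ 0 := by nlinarith
    have h1 : ContinuousAt (fun t : ℝ => (((1 - t ^ 2) ^ (-(3 : ℝ) / 2) : ℝ) : ℂ)) t :=
      continuous_ofReal.continuousAt.comp
        ((continuousAt_const.sub (continuous_pow 2).continuousAt).rpow_const (Or.inl hu))
    exact (h1.mul ((continuousAt_ofReal_cpow_const t _ (Or.inr ht0.ne')).sub
      continuousAt_const)).continuousWithinAt
  · rw [norm_mul, norm_real, norm_of_nonneg (rpow_nonneg (by nlinarith) _)]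
    calc (1 - t ^ 2) ^ (-(3 : ℝ) / 2) * ‖(t : ℂ) ^ w - 1‖
        ≤ (1 - t ^ 2) ^ (-(3 : ℝ) / 2) * (C * (1 - t)) :=
          mul_le_mul_of_nonneg_left (hC t ⟨ht0.le, ht1.le⟩) (rpow_nonneg (by nlinarith) _)
      _ ≤ C * (1 - t) ^ (-(3 : ℝ) / 2 + 1) := by
          rw [mul_left_comm]
          exact mul_le_mul_of_nonneg_left (one_sub_sq_rpow_mul_le (by norm_num) ht0.le ht1) hC0
      _ = C * (1 - t) ^ (-(1 : ℝ) / 2) := by norm_num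

lemma ofReal_sqrt_pi : ((√π : ℝ) : ℂ) = (π : ℂ) ^ (1 / 2 : ℂ) := by
  rw [Real.sqrt_eq_rpow, ofReal_cpow pi_pos.le]
  push_cast
  rfl

section

variable {s : ℂ}

lemma integrableOn_cpow_mul_one_sub_sq_rpow_neg_half (hs : 0 < s.re) :
    IntegrableOn (fun t : ℝ => (t : ℂ) ^ (s - 1) * (((1 - t ^ 2) ^ (-(1 : ℝ) / 2) : ℝ) : ℂ))
      (Ioo 0 1) :=
  (integrableOn_cpow_mul_one_sub_sq_cpow (a := s / 2) (b := 1 / 2) (by simpa using hs)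
    (by norm_num)).congr_fun (fun t ht => cpow_mul_one_sub_sq_cpow_half_eq s
      (by nlinarith [ht.1, ht.2])) measurableSet_Ioo

lemma setIntegral_one_sub_sq_rpow_mul_cpow_sub_one (hs : 1 < s.re) :
    ∫ t in Ioo (0 : ℝ) 1, (((1 - t ^ 2) ^ (-(3 : ℝ) / 2) : ℝ) : ℂ) * ((t : ℂ) ^ (s - 1) - 1) =
      -(s - 1) *
        ∫ t in Ioo (0 : ℝ) 1, (t : ℂ) ^ (s - 1) * (((1 - t ^ 2) ^ (-(1 : ℝ) / 2) : ℝ) : ℂ) := by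
  have hs1 : s - 1 ≠ 0 := fun h => by simp [sub_eq_zero.1 h] at hs
  set F : ℝ → ℂ := fun t => ((t * (1 - t ^ 2) ^ (-(1 : ℝ) / 2) : ℝ) : ℂ) * ((t : ℂ) ^ (s - 1) - 1)
  have hf := integrableOn_one_sub_sq_rpow_mul_cpow_sub_one (w := s - 1) (by simpa using hs)
  have hg := (integrableOn_cpow_mul_one_sub_sq_rpow_neg_half (s := s) (by linarith)).const_mul
    (s - 1)
  have hderiv : ∀ t ∈ Ioo (0 : ℝ) 1, HasDerivAt F
      ((((1 - t ^ 2) ^ (-(3 : ℝ) / 2) : ℝ) : ℂ) * ((t : ℂ) ^ (s - 1) - 1) +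
        (s - 1) * ((t : ℂ) ^ (s - 1) * (((1 - t ^ 2) ^ (-(1 : ℝ) / 2) : ℝ) : ℂ))) t := by
    rintro t ⟨ht0, ht1⟩
    have htC : (t : ℂ) ≠ 0 := ofReal_ne_zero.2 ht0.ne'
    refine ((hasDerivAt_mul_one_sub_sq_rpow_neg_half (by nlinarith)).ofReal_comp.mul
      ((hasDerivAt_ofReal_cpow_const ht0.ne' hs1).sub_const 1)).congr_deriv ?_
    have key : (t : ℂ) ^ (s - 1) = t * (t : ℂ) ^ (s - 1 - 1) := by
      conv_lhs => rw [show s - 1 = 1 + (s - 1 - 1) by ring, cpow_add _ _ htC, cpow_one]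
    rw [key]
    push_cast
    ring
  have hFTC := intervalIntegral.integral_eq_sub_of_hasDerivAt_of_le zero_le_one
    (continuousOn_mul_one_sub_sq_rpow_mul_cpow_sub_one (by simpa using hs)) hderiv
    ((intervalIntegrable_iff_integrableOn_Ioo_of_le zero_le_one).2 (hf.add hg))
  rw [intervalIntegral.integral_of_le zero_le_one, integral_Ioc_eq_integral_Ioo,
    integral_add hf hg, integral_const_mul] at hFTC
  simp only [ofReal_one, one_cpow, sub_self, mul_zero, zero_mul, ofReal_zero] at hFTC
  linear_combination hFTC

lemma sub_one_mul_betaIntegral_div_two_one_half (hs : 1 < s.re) :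
    (s - 1) * betaIntegral (s / 2) (1 / 2) = 2 * √π * Gamma (s / 2) / Gamma ((s - 1) / 2) := by
  have hs2 : 0 < (s / 2).re := by rw [div_ofNat_re]; linarith
  have hs12 : 0 < ((s - 1) / 2).re := by rw [div_ofNat_re, sub_re, one_re]; linarith
  have hB := Gamma_mul_Gamma_eq_betaIntegral hs2 (by norm_num : 0 < (1 / 2 : ℂ).re)
  rw [Complex.Gamma_one_half_eq, ← ofReal_sqrt_pi, show s / 2 + 1 / 2 = (s - 1) / 2 + 1 by ring,
    Gamma_add_one _ (fun h => by simp [h] at hs12)] at hB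
  rw [eq_div_iff (Gamma_ne_zero_of_re_pos hs12)]
  linear_combination -2 * hB

end

lemma Complex.Gammaℝ_div_Gammaℝ_sub_one (s : ℂ) :
    Gammaℝ s / Gammaℝ (s - 1) = Gamma (s / 2) / (√π * Gamma ((s - 1) / 2)) := by
  have hπ : (π : ℂ) ≠ 0 := ofReal_ne_zero.2 pi_ne_zero
  rw [Gammaℝ_def, Gammaℝ_def, show -(s - 1) / 2 = -s / 2 + 1 / 2 by ring, cpow_add _ _ hπ,
    ← ofReal_sqrt_pi, mul_assoc, mul_div_mul_left _ _ (by simp [hπ])]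

/-- Proposition `p:beta_v`(ii),(iv) of the paper at a real place (the Mellin
transform of the distribution `β_v`): for `s ∈ ℂ` with `Re s > 1`, the integral
`∫₀¹ (1 - t²)^{-3/2} (t^{s-1} - 1) dt` converges absolutely and equals
`-√π · Γ(s/2)/Γ((s-1)/2)`; equivalently
`-π⁻¹ ∫₀¹ (1 - t²)^{-3/2} (t^{s-1} - 1) dt = ζ_ℝ(s)/ζ_ℝ(s-1)`, where
`ζ_ℝ(s) = π^{-s/2} Γ(s/2)`. -/
theorem stmt_11 (s : ℂ) (hs : 1 < s.re) :
    IntegrableOn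
      (fun t : ℝ =>
        (((1 - t ^ 2) ^ (-(3 : ℝ) / 2) : ℝ) : ℂ) * ((t : ℂ) ^ (s - 1) - 1))
      (Set.Ioo (0 : ℝ) 1) volume ∧
    ∫ t in Set.Ioo (0 : ℝ) 1,
        (((1 - t ^ 2) ^ (-(3 : ℝ) / 2) : ℝ) : ℂ) * ((t : ℂ) ^ (s - 1) - 1)
      = -(Real.sqrt π : ℂ) * Complex.Gamma (s / 2) / Complex.Gamma ((s - 1) / 2) ∧
    -(π : ℂ)⁻¹ * ∫ t in Set.Ioo (0 : ℝ) 1,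
        (((1 - t ^ 2) ^ (-(3 : ℝ) / 2) : ℝ) : ℂ) * ((t : ℂ) ^ (s - 1) - 1)
      = ((π : ℂ) ^ (-s / 2) * Complex.Gamma (s / 2)) /
          ((π : ℂ) ^ (-(s - 1) / 2) * Complex.Gamma ((s - 1) / 2)) := by
  have hval : ∫ t in Ioo (0 : ℝ) 1,
      (((1 - t ^ 2) ^ (-(3 : ℝ) / 2) : ℝ) : ℂ) * ((t : ℂ) ^ (s - 1) - 1) =
        -(√π : ℂ) * Gamma (s / 2) / Gamma ((s - 1) / 2) := by
    rw [setIntegral_one_sub_sq_rpow_mul_cpow_sub_one hs,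
      setIntegral_cpow_mul_one_sub_sq_rpow_neg_half, neg_mul, mul_div_assoc',
      sub_one_mul_betaIntegral_div_two_one_half hs]
    ring
  refine ⟨integrableOn_one_sub_sq_rpow_mul_cpow_sub_one (by simpa using hs), hval, ?_⟩
  have hsqrt : ((√π : ℝ) : ℂ) ^ 2 = π := by rw [← ofReal_pow, sq_sqrt pi_pos.le]
  rw [← Gammaℝ_def, ← Gammaℝ_def, Gammaℝ_div_Gammaℝ_sub_one, hval, ← hsqrt]
  field_simp
end

section
/- The pushforward of Lebesgue measure on ℝ under the map x ↦ (1 + x²)^{−1/2} equals the measure on ℝ given by the density t ↦ 2·t^{−2}·(1 − t²)^{−1/2} on the open interval (0, 1) and zero outside, with respect to Lebesgue measure. (Lemma 'l:alpha_v'(ii) of the paper: the explicit description of the measure α_v at a real place.) -/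
/-!
The map `x ↦ (1 + x²)^{-1/2}` is even, so its pushforward of Lebesgue measure is twice the
pushforward of Lebesgue measure on `(0, ∞)`. On `(0, ∞)` it is a bijection onto `(0, 1)` with
inverse `g t = √(1 - t²) / t`, and `|g' t| = t⁻² (1 - t²)^{-1/2}`; the change of variables formula
for `g` on `(0, 1)`, pushed forward along its left inverse, gives the density.
-/

open MeasureTheory Set
open scoped ENNReal

section ChangeOfVariables

variable {E : Type*} [NormedAddCommGroup E] [NormedSpace ℝ E] [FiniteDimensional ℝ E]
  [MeasurableSpace E] [BorelSpace E] (μ : Measure E) [μ.IsAddHaarMeasure]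

theorem map_restrict_image_eq_withDensity_of_leftInvOn {s : Set E} {f g : E → E}
    {g' : E → E →L[ℝ] E} (hs : MeasurableSet s) (hf : Measurable f)
    (hg' : ∀ x ∈ s, HasFDerivWithinAt g (g' x) s x) (hfg : LeftInvOn f g s) :
    (μ.restrict (g '' s)).map f =
      (μ.restrict s).withDensity fun x => ENNReal.ofReal |(g' x).det| := by
  set ν := (μ.restrict s).withDensity fun x => ENNReal.ofReal |(g' x).det|
  have hg : AEMeasurable g ν :=
    (ContinuousOn.aemeasurable (fun x hx => (hg' x hx).continuousWithinAt) hs).mono_ac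
      (withDensity_absolutelyContinuous _ _)
  have hfg_ae : f ∘ g =ᵐ[ν] id :=
    Filter.Eventually.mono ((withDensity_absolutelyContinuous _ _).ae_le (ae_restrict_mem hs))
      fun x hx => hfg hx
  rw [← map_withDensity_abs_det_fderiv_eq_addHaar μ hs.nullMeasurableSet hg' hfg.injOn,
    AEMeasurable.map_map_of_aemeasurable hf.aemeasurable hg, Measure.map_congr hfg_ae,
    Measure.map_id]

end ChangeOfVariables

theorem map_volume_eq_two_smul_map_restrict_Ioi {α : Type*} [MeasurableSpace α] {f : ℝ → α}
    (hf : Measurable f) (hf_even : f.Even) :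
    (volume : Measure ℝ).map f = (2 : ℝ≥0∞) • (volume.restrict (Ioi 0)).map f := by
  have hneg : (volume.restrict (Ioi (0 : ℝ))).map Neg.neg = volume.restrict (Iio 0) := by
    have hpre : Neg.neg ⁻¹' Iio (0 : ℝ) = Ioi 0 := by simp
    rw [← hpre, ← Measure.restrict_map measurable_neg measurableSet_Iio, Measure.map_neg_eq_self]
  have hf_neg : f ∘ Neg.neg = f := funext hf_even
  calc (volume : Measure ℝ).map f
      = ((volume : Measure ℝ).restrict (Iio 0) + volume.restrict (Ioi 0)).map f := by
        rw [restrict_Ioi_eq_restrict_Ici, ← compl_Iio,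
          Measure.restrict_add_restrict_compl measurableSet_Iio]
    _ = (2 : ℝ≥0∞) • (volume.restrict (Ioi 0)).map f := by
        rw [Measure.map_add _ _ hf, ← hneg, Measure.map_map hf measurable_neg, hf_neg, two_smul]

theorem rpow_neg_half_eq_inv_sqrt {x : ℝ} (hx : 0 ≤ x) : x ^ (-(1 : ℝ) / 2) = (√x)⁻¹ := by
  rw [neg_div, Real.rpow_neg hx, Real.sqrt_eq_rpow]

theorem hasDerivAt_sqrt_one_sub_sq_div {t : ℝ} (ht₀ : t ≠ 0) (ht : t ^ 2 < 1) :
    HasDerivAt (fun t => √(1 - t ^ 2) / t) (-(t⁻¹ ^ 2 * (√(1 - t ^ 2))⁻¹)) t := by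
  have hr : 0 < √(1 - t ^ 2) := Real.sqrt_pos.2 (by linarith)
  have hr_sq : √(1 - t ^ 2) ^ 2 = 1 - t ^ 2 := Real.sq_sqrt (by linarith)
  have h := ((hasDerivAt_pow 2 t).const_sub 1).sqrt (by linarith) |>.fun_div (hasDerivAt_id' t) ht₀
  refine h.congr_deriv ?_
  field_simp
  norm_num
  linear_combination (-2) * hr_sq

theorem inv_sqrt_one_add_sq_sqrt_one_sub_sq_div {t : ℝ} (ht₀ : 0 < t) (ht : t ^ 2 ≤ 1) :
    (√(1 + (√(1 - t ^ 2) / t) ^ 2))⁻¹ = t := by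
  have h : 1 + (√(1 - t ^ 2) / t) ^ 2 = t⁻¹ ^ 2 := by
    rw [div_pow, Real.sq_sqrt (by linarith)]
    field_simp
    ring
  rw [h, Real.sqrt_sq (by positivity), inv_inv]

theorem sqrt_one_sub_sq_inv_sqrt_one_add_sq_div {x : ℝ} (hx : 0 ≤ x) :
    √(1 - (√(1 + x ^ 2))⁻¹ ^ 2) / (√(1 + x ^ 2))⁻¹ = x := by
  have ha : 0 < √(1 + x ^ 2) := Real.sqrt_pos.2 (by positivity)
  have h : 1 - (√(1 + x ^ 2))⁻¹ ^ 2 = (x * (√(1 + x ^ 2))⁻¹) ^ 2 := by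
    rw [mul_pow, inv_pow, Real.sq_sqrt (by positivity)]
    field_simp
    ring
  rw [h, Real.sqrt_sq (by positivity)]
  field_simp

theorem inv_sqrt_one_add_sq_mem_Ioo {x : ℝ} (hx : x ≠ 0) : (√(1 + x ^ 2))⁻¹ ∈ Ioo 0 1 := by
  have hx2 : 0 < x ^ 2 := by positivity
  have h : 1 < √(1 + x ^ 2) := (Real.lt_sqrt zero_le_one).2 (by linarith)
  exact mem_Ioo.2 ⟨inv_pos.2 (zero_lt_one.trans h), inv_lt_one_of_one_lt₀ h⟩

theorem image_sqrt_one_sub_sq_div_Ioo :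
    (fun t : ℝ => √(1 - t ^ 2) / t) '' Ioo 0 1 = Ioi 0 := by
  refine Subset.antisymm ?_ fun x (hx : 0 < x) => ?_
  · rintro _ ⟨t, ⟨ht₀, ht₁⟩, rfl⟩
    exact div_pos (Real.sqrt_pos.2 (by nlinarith)) ht₀
  · exact ⟨_, inv_sqrt_one_add_sq_mem_Ioo hx.ne', sqrt_one_sub_sq_inv_sqrt_one_add_sq_div hx.le⟩

theorem map_inv_sqrt_one_add_sq_restrict_Ioi :
    (volume.restrict (Ioi 0)).map (fun x : ℝ => (√(1 + x ^ 2))⁻¹) =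
      (volume.restrict (Ioo 0 1)).withDensity
        fun t => ENNReal.ofReal (t⁻¹ ^ 2 * (√(1 - t ^ 2))⁻¹) := by
  have hderiv : ∀ t ∈ Ioo (0 : ℝ) 1, HasFDerivWithinAt (fun t : ℝ => √(1 - t ^ 2) / t)
      ((1 : ℝ →L[ℝ] ℝ).smulRight (-(t⁻¹ ^ 2 * (√(1 - t ^ 2))⁻¹))) (Ioo 0 1) t :=
    fun t ⟨ht₀, ht₁⟩ =>
      (hasDerivAt_sqrt_one_sub_sq_div ht₀.ne' (by nlinarith)).hasFDerivAt.hasFDerivWithinAt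
  have hinv : LeftInvOn (fun x : ℝ => (√(1 + x ^ 2))⁻¹) (fun t => √(1 - t ^ 2) / t) (Ioo 0 1) :=
    fun t ⟨ht₀, ht₁⟩ => inv_sqrt_one_add_sq_sqrt_one_sub_sq_div ht₀ (by nlinarith)
  rw [← image_sqrt_one_sub_sq_div_Ioo, map_restrict_image_eq_withDensity_of_leftInvOn volume
    measurableSet_Ioo (by fun_prop) hderiv hinv]
  simp only [ContinuousLinearMap.smulRight_one_eq_toSpanSingleton,
    ContinuousLinearMap.det_toSpanSingleton, abs_neg]
  congr with t
  rw [abs_of_nonneg (by positivity)]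

/-- Lemma `l:alpha_v`(ii) of the paper: the pushforward of Lebesgue measure on
`ℝ` under `x ↦ (1 + x²)^{-1/2}` equals the measure with density
`t ↦ 2 t⁻² (1 - t²)^{-1/2}` on `(0,1)` (and zero outside) with respect to
Lebesgue measure. -/
theorem stmt_13 :
    Measure.map (fun x : ℝ => (1 + x ^ 2) ^ (-(1 : ℝ) / 2)) volume =
      volume.withDensity (fun t : ℝ =>
        if t ∈ Set.Ioo (0 : ℝ) 1 then
          ENNReal.ofReal (2 * t⁻¹ ^ 2 * (1 - t ^ 2) ^ (-(1 : ℝ) / 2))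
        else 0) := by
  have hf : (fun x : ℝ => (1 + x ^ 2) ^ (-(1 : ℝ) / 2)) = fun x => (√(1 + x ^ 2))⁻¹ :=
    funext fun x => rpow_neg_half_eq_inv_sqrt (by positivity)
  rw [hf, map_volume_eq_two_smul_map_restrict_Ioi (by fun_prop) fun x => by simp,
    map_inv_sqrt_one_add_sq_restrict_Ioi, ← withDensity_smul' _ _ ENNReal.ofNat_ne_top,
    ← withDensity_indicator measurableSet_Ioo]
  congr 1
  funext t
  by_cases ht : t ∈ Ioo (0 : ℝ) 1
  · have h : 0 ≤ 1 - t ^ 2 := by nlinarith [ht.1, ht.2]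
    rw [indicator_of_mem ht, if_pos ht, rpow_neg_half_eq_inv_sqrt h, mul_assoc,
      ENNReal.ofReal_mul zero_le_two, ENNReal.ofReal_ofNat, Pi.smul_apply, smul_eq_mul]
  · rw [indicator_of_notMem ht, if_neg ht]
end

section
/- The pushforward of twice the Lebesgue measure on ℂ ≅ ℝ² under the map z ↦ (1 + |z|²)^{−1} equals the measure on ℝ given by the density t ↦ 2π·t^{−2} on the open interval (0, 1) and zero outside, with respect to Lebesgue measure. (Lemma 'l:alpha_v'(iii) of the paper: the explicit description of the measure α_v at a complex place.) -/
/-!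
Test the two measures against a measurable `f ≥ 0`. In polar coordinates,
`∫ f((1 + |z|²)⁻¹) dz = 2π ∫_{r > 0} r f((1 + r²)⁻¹) dr`, and the substitution
`t = (1 + r²)⁻¹`, a bijection from `(0, ∞)` onto `(0, 1)` with `r dr = -dt / (2t²)`, turns
this into `π ∫_{(0,1)} f(t) t⁻² dt`.
-/

open MeasureTheory Real Set
open scoped ENNReal

theorem Complex.lintegral_comp_norm {f : ℝ → ℝ≥0∞} (hf : Measurable f) :
    ∫⁻ z : ℂ, f ‖z‖ = ENNReal.ofReal (2 * π) * ∫⁻ r in Ioi 0, ENNReal.ofReal r * f r := by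
  rw [← Complex.lintegral_comp_polarCoord_symm,
    show polarCoord.target = Ioi (0 : ℝ) ×ˢ Ioo (-π) π from rfl,
    setLIntegral_congr_fun (measurableSet_Ioi.prod measurableSet_Ioo)
      (g := fun p => ENNReal.ofReal p.1 * f p.1)
      (fun p hp => by rw [Complex.norm_polarCoord_symm, abs_of_pos hp.1]; rfl),
    Measure.volume_eq_prod, setLIntegral_prod _ (by fun_prop)]
  simp only [lintegral_const, Measure.restrict_apply_univ, Real.volume_Ioo, sub_neg_eq_add,
    ← two_mul]
  rw [lintegral_mul_const' _ _ ENNReal.ofReal_ne_top, mul_comm]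

theorem hasDerivAt_inv_one_add_sq (r : ℝ) :
    HasDerivAt (fun r : ℝ => (1 + r ^ 2)⁻¹) (-(2 * r) / (1 + r ^ 2) ^ 2) r := by
  simpa using ((hasDerivAt_pow 2 r).const_add 1).fun_inv (by positivity)

theorem strictAntiOn_inv_one_add_sq : StrictAntiOn (fun r : ℝ => (1 + r ^ 2)⁻¹) (Ici 0) :=
  fun a ha b _ hab => by
    have : a ^ 2 < b ^ 2 := pow_lt_pow_left₀ hab ha two_ne_zero
    dsimp only
    gcongr

theorem image_inv_one_add_sq_Ioi : (fun r : ℝ => (1 + r ^ 2)⁻¹) '' Ioi 0 = Ioo 0 1 := by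
  ext t
  constructor
  · rintro ⟨r, hr, rfl⟩
    exact ⟨by positivity, inv_lt_one_of_one_lt₀ (by simp only [mem_Ioi] at hr; nlinarith)⟩
  · rintro ⟨ht0, ht1⟩
    have hpos : 0 < t⁻¹ - 1 := by rw [sub_pos]; exact one_lt_inv_iff₀.2 ⟨ht0, ht1⟩
    refine ⟨√(t⁻¹ - 1), Real.sqrt_pos.2 hpos, ?_⟩
    simp [Real.sq_sqrt hpos.le]

theorem lintegral_comp_inv_one_add_sq (f : ℝ → ℝ≥0∞) :
    ∫⁻ r in Ioi 0, ENNReal.ofReal r * f (1 + r ^ 2)⁻¹ =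
      ∫⁻ t in Ioo 0 1, ENNReal.ofReal (t⁻¹ ^ 2 / 2) * f t := by
  rw [← image_inv_one_add_sq_Ioi, lintegral_image_eq_lintegral_abs_deriv_mul measurableSet_Ioi
    (fun r _ => (hasDerivAt_inv_one_add_sq r).hasDerivWithinAt)
    (strictAntiOn_inv_one_add_sq.injOn.mono Ioi_subset_Ici_self)]
  refine setLIntegral_congr_fun measurableSet_Ioi fun r (hr : 0 < r) => ?_
  rw [← mul_assoc, ← ENNReal.ofReal_mul (abs_nonneg _)]
  congr 2
  have : 1 + r ^ 2 ≠ 0 := by positivity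
  rw [abs_div, abs_neg, abs_of_pos (by positivity), abs_of_pos (by positivity)]
  field_simp

/-- Lemma `l:alpha_v`(iii) of the paper: the pushforward of twice the Lebesgue
measure on `ℂ ≅ ℝ²` under `z ↦ (1 + |z|²)⁻¹` equals the measure with density
`t ↦ 2π t⁻²` on `(0,1)` (and zero outside) with respect to Lebesgue measure. -/
theorem stmt_14 :
    Measure.map (fun z : ℂ => (1 + ‖z‖ ^ 2)⁻¹)
        ((2 : ℝ≥0∞) • (volume : Measure ℂ)) =
      volume.withDensity (fun t : ℝ =>
        if t ∈ Set.Ioo (0 : ℝ) 1 then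
          ENNReal.ofReal (2 * π * t⁻¹ ^ 2)
        else 0) := by
  refine Measure.ext_of_lintegral _ fun f hf => ?_
  have hdensity : (fun t : ℝ => if t ∈ Ioo (0 : ℝ) 1 then ENNReal.ofReal (2 * π * t⁻¹ ^ 2) else 0)
      = (Ioo 0 1).indicator fun t => ENNReal.ofReal (2 * π * t⁻¹ ^ 2) := by
    ext t; rw [indicator_apply]
  calc ∫⁻ t, f t ∂Measure.map (fun z : ℂ => (1 + ‖z‖ ^ 2)⁻¹) ((2 : ℝ≥0∞) • volume)
      = 2 * (ENNReal.ofReal (2 * π) * ∫⁻ t in Ioo 0 1, ENNReal.ofReal (t⁻¹ ^ 2 / 2) * f t) := by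
        rw [lintegral_map hf (by fun_prop), lintegral_smul_measure, smul_eq_mul,
          Complex.lintegral_comp_norm (f := fun r => f (1 + r ^ 2)⁻¹) (by fun_prop),
          lintegral_comp_inv_one_add_sq]
    _ = ∫⁻ t in Ioo 0 1, ENNReal.ofReal (2 * π * t⁻¹ ^ 2) * f t := by
        rw [← lintegral_const_mul' _ _ ENNReal.ofReal_ne_top,
          ← lintegral_const_mul' _ _ (by simp)]
        refine setLIntegral_congr_fun measurableSet_Ioo fun t _ => ?_
        rw [← mul_assoc, ← mul_assoc, ← ENNReal.ofReal_ofNat 2,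
          ← ENNReal.ofReal_mul zero_le_two, ← ENNReal.ofReal_mul (by positivity)]
        congr 2
        ring
    _ = _ := by
        rw [hdensity, lintegral_withDensity_eq_lintegral_mul _
            ((Measurable.ennreal_ofReal (by fun_prop)).indicator measurableSet_Ioo) hf,
          ← lintegral_indicator measurableSet_Ioo]
        simp only [Pi.mul_apply, indicator_mul_left]
end

section
/- Let S be a type, R a commutative ring, and q : S → R. For a finitely supported function D : S →₀ ℕ define α(D) = ∏_{x ∈ supp(D)} (q(x)^{D(x)} − q(x)^{D(x)−1}) and r(D) = ∏_{x ∈ supp(D)} (1 − q(x)). Then for every D : S →₀ ℕ one has Σ_{(D₁,D₂) : D₁ + D₂ = D} α(D₁)·r(D₂) = 1 if D = 0 and = 0 otherwise (the sum taken over the antidiagonal of D). (The function-field case of Proposition 'p:alpha invertible' of the paper: Schieder's function r is the convolution inverse of α in the completed semigroup algebra of effective divisors.) -/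
/-!
Both `α` and `r` are multiplicative: their value at `D` is a product over `x ∈ supp D` of a
local factor depending only on `D x`, normalised to be `1` at `D x = 0`. The convolution of
two such functions is again multiplicative, with local factor the convolution of the local
factors, so the identity reduces to one point. There the generating series of the local
factors are `(1 - X) / (1 - q X)` and `(1 - q X) / (1 - X)`, which are mutually inverse;
concretely, the partial sums of the local factor of `α` telescope to `q ^ m`.
-/

open Finset.HasAntidiagonal

namespace Finsupp

variable {S : Type*}

lemma prod_single_add_of_notMem {M : Type*} [CommMonoid M] {a : S} {E : S →₀ ℕ}
    (ha : a ∉ E.support) (n : ℕ) (f : S → ℕ → M) (hf : ∀ x, f x 0 = 1) :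
    (single a n + E).prod f = f a n * E.prod f := by
  rw [prod_add_index_of_disjoint, prod_single_index (hf a)]
  exact Finset.disjoint_of_subset_left support_single_subset
    (Finset.disjoint_singleton_left.mpr ha)

variable [DecidableEq S]

lemma prod_ite_eq_zero_one_zero {M : Type*} [CommMonoidWithZero M] (D : S →₀ ℕ) :
    (D.prod fun _ n => if n = 0 then (1 : M) else 0) = if D = 0 then 1 else 0 := by
  split_ifs with hD
  · simp [hD]
  · obtain ⟨x, hx⟩ := support_nonempty_iff.mpr hD
    exact Finset.prod_eq_zero hx (if_neg (mem_support_iff.mp hx))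

lemma notMem_support_of_mem_antidiagonal {a : S} {D : S →₀ ℕ} (ha : a ∉ D.support)
    {P : (S →₀ ℕ) × (S →₀ ℕ)} (hP : P ∈ antidiagonal D) :
    a ∉ P.1.support ∧ a ∉ P.2.support := by
  rw [mem_antidiagonal] at hP
  exact ⟨fun h => ha (support_mono (hP ▸ le_self_add) h),
    fun h => ha (support_mono (hP ▸ le_add_self) h)⟩

theorem sum_antidiagonal_single_add {M : Type*} [AddCommMonoid M] {a : S} {D : S →₀ ℕ}
    (ha : a ∉ D.support) (n : ℕ) (F : (S →₀ ℕ) × (S →₀ ℕ) → M) :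
    ∑ P ∈ antidiagonal (single a n + D), F P =
      ∑ p ∈ antidiagonal n, ∑ E ∈ antidiagonal D,
        F (single a p.1 + E.1, single a p.2 + E.2) := by
  rw [← Finset.sum_product']
  refine Finset.sum_nbij' (fun P => ((P.1 a, P.2 a), (P.1.erase a, P.2.erase a)))
    (fun Q => (single a Q.1.1 + Q.2.1, single a Q.1.2 + Q.2.2)) ?_ ?_ ?_ ?_ ?_
  · rintro ⟨P₁, P₂⟩ hP
    rw [mem_antidiagonal] at hP
    simp only [Finset.mem_product, mem_antidiagonal]
    constructor
    · simpa [notMem_support_iff.mp ha] using congr($hP a)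
    · rw [← erase_add, hP, erase_add, erase_single, erase_of_notMem_support ha, zero_add]
  · rintro ⟨⟨i, j⟩, ⟨E₁, E₂⟩⟩ hQ
    simp only [Finset.mem_product, mem_antidiagonal] at hQ ⊢
    rw [← hQ.1, ← hQ.2, single_add]
    abel
  · rintro ⟨P₁, P₂⟩ -
    simp [single_add_erase]
  · rintro ⟨⟨i, j⟩, E⟩ hQ
    rw [Finset.mem_product] at hQ
    obtain ⟨h₁, h₂⟩ := notMem_support_of_mem_antidiagonal ha hQ.2
    simp [h₁, h₂, notMem_support_iff.mp h₁, notMem_support_iff.mp h₂]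
  · intro P _
    simp [single_add_erase]

theorem sum_antidiagonal_prod_mul_prod {R : Type*} [CommSemiring R] (f g : S → ℕ → R)
    (hf : ∀ x, f x 0 = 1) (hg : ∀ x, g x 0 = 1) (D : S →₀ ℕ) :
    ∑ P ∈ antidiagonal D, P.1.prod f * P.2.prod g =
      D.prod fun x n => ∑ p ∈ antidiagonal n, f x p.1 * g x p.2 := by
  induction D using Finsupp.induction with
  | zero => simp
  | single_add a n D ha _ ih =>
    rw [sum_antidiagonal_single_add ha, prod_single_add_of_notMem ha _ _ (by simp [hf, hg]),
      ← ih, Finset.sum_mul_sum]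
    refine Finset.sum_congr rfl fun p _ => Finset.sum_congr rfl fun E hE => ?_
    obtain ⟨h₁, h₂⟩ := notMem_support_of_mem_antidiagonal ha hE
    rw [prod_single_add_of_notMem h₁ _ _ hf, prod_single_add_of_notMem h₂ _ _ hg]
    ring

end Finsupp

section LocalFactors

variable {R : Type*} [CommRing R]

/- The local factors of `α` and `r` at a point with `q_x = c` and multiplicity `k`; the value
`1` at `k = 0` makes `α D` and `r D` the `Finsupp.prod` of `D` against them. -/
def alphaFactor (c : R) (k : ℕ) : R := if k = 0 then 1 else c ^ k - c ^ (k - 1)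

def schiederFactor (c : R) (k : ℕ) : R := if k = 0 then 1 else 1 - c

theorem sum_range_alphaFactor (c : R) (m : ℕ) :
    ∑ i ∈ Finset.range (m + 1), alphaFactor c i = c ^ m := by
  simp [Finset.sum_range_succ', alphaFactor, Finset.sum_range_sub (c ^ ·)]

theorem sum_antidiagonal_alphaFactor_mul_schiederFactor (c : R) (n : ℕ) :
    ∑ p ∈ antidiagonal n, alphaFactor c p.1 * schiederFactor c p.2 =
      if n = 0 then 1 else 0 := by
  cases n with
  | zero => simp [alphaFactor, schiederFactor]
  | succ m =>
    rw [Finset.Nat.sum_antidiagonal_succ', if_neg m.succ_ne_zero]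
    simp only [schiederFactor, Nat.succ_ne_zero, ↓reduceIte, mul_one]
    rw [Finset.Nat.sum_antidiagonal_eq_sum_range_succ (fun i _ => alphaFactor c i * (1 - c)),
      ← Finset.sum_mul, sum_range_alphaFactor, alphaFactor, if_neg m.succ_ne_zero,
      Nat.add_sub_cancel]
    ring

end LocalFactors

/-- The function-field case of Proposition `p:alpha invertible` of the paper:
Schieder's function `r` is the convolution inverse of `α` in the completed
semigroup algebra of effective divisors.  For `D : S →₀ ℕ` set
`α(D) = ∏_{x ∈ supp D} (q x ^ D x - q x ^ (D x - 1))` and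
`r(D) = ∏_{x ∈ supp D} (1 - q x)`; then
`Σ_{D₁ + D₂ = D} α(D₁) r(D₂)` is `1` if `D = 0` and `0` otherwise. -/
theorem stmt_16 {S : Type*} [DecidableEq S] {R : Type*} [CommRing R] (q : S → R)
    (D : S →₀ ℕ) :
    ∑ P ∈ Finset.HasAntidiagonal.antidiagonal D,
        (∏ x ∈ P.1.support, (q x ^ P.1 x - q x ^ (P.1 x - 1))) *
          (∏ x ∈ P.2.support, (1 - q x))
      = if D = 0 then 1 else 0 := by
  calc _ = ∑ P ∈ antidiagonal D,
        P.1.prod (fun x => alphaFactor (q x)) * P.2.prod (fun x => schiederFactor (q x)) := by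
        refine Finset.sum_congr rfl fun P _ => ?_
        congr 1 <;>
          exact Finset.prod_congr rfl fun x hx => (if_neg (Finsupp.mem_support_iff.mp hx)).symm
    _ = D.prod fun _ n => if n = 0 then (1 : R) else 0 := by
        rw [Finsupp.sum_antidiagonal_prod_mul_prod _ _ (fun _ => rfl) (fun _ => rfl)]
        simp only [sum_antidiagonal_alphaFactor_mul_schiederFactor]
    _ = if D = 0 then 1 else 0 := Finsupp.prod_ite_eq_zero_one_zero D
end
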